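/- The inclusion of the graph of non-separating discs D G_ns into the disc graph D G of a handlebody H of genus g ≥ 2 is an isometric embedding: any two non-separating discs can be joined in D G by a geodesic all of whose vertices are non-separating discs. -/

import Mathlib

/-- Abstract model of the disc graph of a handlebody `H` of genus `g ≥ 2`. -/
structure DiscGraphSetup where
  /-- isotopy classes of essential discs in `H` -/
  Disc : Type
  /-- the disc graph: edges between distinct disjointly realizable discs -/
  DG : SimpleGraph Disc
  /-- the disc is separating -/
  separating : Disc → Prop
  /-- the disc graph is connected -/
  conn : DG.Connected
  /-- key fact: if `S` is a separating disc disjoint from two intersecting discs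
  `D ≠ D'` (so that `∂D` and `∂D'` lie in the same complementary component of `∂S`),
  then there is a non-separating disc disjoint from both `D` and `D'` -/
  nonsep_replace : ∀ S D D' : Disc, separating S → DG.Adj S D → DG.Adj S D' →
    ¬ DG.Adj D D' → D ≠ D' →
    ∃ S', ¬ separating S' ∧ DG.Adj S' D ∧ DG.Adj S' D'

private lemma walk_to_induce {V : Type} {G : SimpleGraph V} {s : Set V} :
    ∀ {u v : V} (w : G.Walk u v), (∀ x ∈ w.support, x ∈ s) →
    ∀ (hu : u ∈ s) (hv : v ∈ s),
    ∃ w' : (G.induce s).Walk ⟨u, hu⟩ ⟨v, hv⟩, w'.length = w.length := by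
  intro u v w
  induction w with
  | nil => intro _ hu hv; exact ⟨SimpleGraph.Walk.nil, rfl⟩
  | @cons a b c h p ih =>
    intro hs hu hv
    have hb : b ∈ s := hs b (by simp)
    obtain ⟨w', hw'⟩ := ih (fun x hx => hs x (by simp [hx])) hb hv
    exact ⟨SimpleGraph.Walk.cons (by exact h) w', by show w'.length + 1 = p.length + 1; rw [hw']⟩

private lemma key (H : DiscGraphSetup) (E : H.Disc) (hE : ¬ H.separating E) :
    ∀ n : ℕ, ∀ D : H.Disc, ¬ H.separating D → H.DG.dist D E = n →
    ∃ w : H.DG.Walk D E, w.length = n ∧ ∀ v ∈ w.support, ¬ H.separating v := by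
  intro n
  induction n with
  | zero =>
    intro D hD hd
    have : D = E := (H.conn.dist_eq_zero_iff).mp hd
    subst this
    exact ⟨SimpleGraph.Walk.nil, rfl, by simp [hD]⟩
  | succ n ih =>
    intro D hD hd
    obtain ⟨w, hw⟩ := H.conn.exists_walk_length_eq_dist D E
    rw [hd] at hw
    cases w with
    | nil => simp at hw
    | @cons _ c _ h p =>
      simp only [SimpleGraph.Walk.length_cons, Nat.succ_inj] at hw
      have hcE : H.DG.dist c E = n := by
        have h1 : H.DG.dist c E ≤ n := hw ▸ H.DG.dist_le p
        have h2 : H.DG.dist D E ≤ H.DG.dist D c + H.DG.dist c E := H.conn.dist_triangle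
        have h3 : H.DG.dist D c ≤ 1 := H.DG.dist_le (SimpleGraph.Walk.cons h SimpleGraph.Walk.nil)
        omega
      by_cases hc : H.separating c
      · -- c is separating; n ≥ 1
        have hcne : c ≠ E := fun he => hE (he ▸ hc)
        cases n with
        | zero => exact absurd ((H.conn.dist_eq_zero_iff).mp hcE) hcne
        | succ m =>
          cases p with
          | nil => exact absurd rfl hcne
          | @cons _ c2 _ h2 q =>
            simp only [SimpleGraph.Walk.length_cons, Nat.succ_inj] at hw
            have hc2E : H.DG.dist c2 E = m := by
              have h1 : H.DG.dist c2 E ≤ m := hw ▸ H.DG.dist_le q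
              have h2' : H.DG.dist c E ≤ H.DG.dist c c2 + H.DG.dist c2 E := H.conn.dist_triangle
              have h3 : H.DG.dist c c2 ≤ 1 := H.DG.dist_le (SimpleGraph.Walk.cons h2 SimpleGraph.Walk.nil)
              omega
            have hnadj : ¬ H.DG.Adj D c2 := by
              intro hadj
              have h1 : H.DG.dist D E ≤ H.DG.dist D c2 + H.DG.dist c2 E := H.conn.dist_triangle
              have h3 : H.DG.dist D c2 ≤ 1 := H.DG.dist_le (SimpleGraph.Walk.cons hadj SimpleGraph.Walk.nil)
              omega
            have hne : D ≠ c2 := by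
              intro he; rw [he, hc2E] at hd; omega
            obtain ⟨S', hS'ns, hS'D, hS'c2⟩ :=
              H.nonsep_replace c D c2 hc h.symm h2 hnadj hne
            have hS'E : H.DG.dist S' E = m + 1 := by
              have h1 : H.DG.dist S' E ≤ H.DG.dist S' c2 + H.DG.dist c2 E := H.conn.dist_triangle
              have h2' : H.DG.dist D E ≤ H.DG.dist D S' + H.DG.dist S' E := H.conn.dist_triangle
              have h3 : H.DG.dist S' c2 ≤ 1 := H.DG.dist_le (SimpleGraph.Walk.cons hS'c2 SimpleGraph.Walk.nil)
              have h4 : H.DG.dist D S' ≤ 1 := H.DG.dist_le (SimpleGraph.Walk.cons hS'D.symm SimpleGraph.Walk.nil)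
              omega
            obtain ⟨p', hp'len, hp'ns⟩ := ih S' hS'ns hS'E
            refine ⟨SimpleGraph.Walk.cons hS'D.symm p', by simp [hp'len], ?_⟩
            intro v hv
            simp only [SimpleGraph.Walk.support_cons, List.mem_cons] at hv
            rcases hv with rfl | hv
            · exact hD
            · exact hp'ns v hv
      · obtain ⟨p', hp'len, hp'ns⟩ := ih c hc hcE
        refine ⟨SimpleGraph.Walk.cons h p', by simp [hp'len], ?_⟩
        intro v hv
        simp only [SimpleGraph.Walk.support_cons, List.mem_cons] at hv
        rcases hv with rfl | hv
        · exact hD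
        · exact hp'ns v hv

/-- The inclusion of the graph of non-separating discs into the disc
graph is an isometric embedding: the induced distance on non-separating discs equals the
distance in the full disc graph, and any two non-separating discs are joined in the disc
graph by a geodesic all of whose vertices are non-separating discs. -/
theorem nonseparating_isometrically_embedded (H : DiscGraphSetup)
    (D E : H.Disc) (hD : ¬ H.separating D) (hE : ¬ H.separating E) :
    ((H.DG.induce {D : H.Disc | ¬ H.separating D}).dist ⟨D, hD⟩ ⟨E, hE⟩ =
      H.DG.dist D E) ∧
    ∃ w : H.DG.Walk D E, w.length = H.DG.dist D E ∧
      ∀ v ∈ w.support, ¬ H.separating v := by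
  obtain ⟨w, hwlen, hwns⟩ := key H E hE (H.DG.dist D E) D hD rfl
  refine ⟨?_, w, hwlen, hwns⟩
  obtain ⟨w', hw'⟩ := walk_to_induce (s := {D : H.Disc | ¬ H.separating D}) w hwns hD hE
  apply le_antisymm
  · have := (H.DG.induce {D : H.Disc | ¬ H.separating D}).dist_le w'
    omega
  · -- dist DG ≤ dist induce : use a geodesic in induce, map to DG
    have hr : (H.DG.induce {D : H.Disc | ¬ H.separating D}).Reachable ⟨D, hD⟩ ⟨E, hE⟩ := ⟨w'⟩
    obtain ⟨g, hg⟩ := hr.exists_walk_length_eq_dist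
    have := H.DG.dist_le (g.map (SimpleGraph.Embedding.induce _).toHom)
    rw [SimpleGraph.Walk.length_map, hg] at this
    exact this
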